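/- Every solution of the OIM dynamics has monotonically nonincreasing energy: if θ : ℝ → ℝ^N is differentiable and satisfies θ'(t) = f(θ(t)) for all t, then for all s ≤ t, E(θ(t)) ≤ E(θ(s)). -/

import Mathlib

/-! The energy is, up to the factor `-2`, a potential of the vector field: by the symmetry of `W`
each coupling term of `E` is differentiated from both of its ends, so the derivative of `E` in
direction `v` is `-2 ⟪f, v⟫`. Along a trajectory `v = f`, hence the energy decreases at rate
`2 ‖f‖²`. -/

open Real Finset

/-- The OIM energy function
`E(θ) = -K ∑_{i,j, j≠i} W i j * cos (θ i - θ j) - K_s ∑ i, cos (2 θ i)`. -/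
noncomputable def oimEnergy (N : ℕ) (K Ks : ℝ) (W : Fin N → Fin N → ℝ)
    (θ : Fin N → ℝ) : ℝ :=
  -K * ∑ i, ∑ j ∈ Finset.univ.filter (fun j => j ≠ i), W i j * Real.cos (θ i - θ j)
    - Ks * ∑ i, Real.cos (2 * θ i)

/-- The OIM vector field `f i (θ) = -K ∑ j, W i j * sin (θ i - θ j) - K_s * sin (2 θ i)`. -/
noncomputable def oimField (N : ℕ) (K Ks : ℝ) (W : Fin N → Fin N → ℝ)
    (θ : Fin N → ℝ) (i : Fin N) : ℝ :=
  -K * ∑ j, W i j * Real.sin (θ i - θ j) - Ks * Real.sin (2 * θ i)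

theorem Finset.sum_sum_mul_sub_of_antisymm {ι R : Type*} [Fintype ι] [CommRing R]
    {a : ι → ι → R} (ha : ∀ i j, a j i = -a i j) (v : ι → R) :
    ∑ i, ∑ j, a i j * (v i - v j) = 2 * ∑ i, (∑ j, a i j) * v i := by
  have hswap : ∑ i, ∑ j, a i j * v j = -∑ i, ∑ j, a i j * v i := by
    rw [Finset.sum_comm, ← Finset.sum_neg_distrib]
    refine Finset.sum_congr rfl fun i _ => ?_
    rw [← Finset.sum_neg_distrib]
    exact Finset.sum_congr rfl fun j _ => by rw [ha, neg_mul]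
  calc ∑ i, ∑ j, a i j * (v i - v j) = ∑ i, ∑ j, a i j * v i - ∑ i, ∑ j, a i j * v j := by
        simp only [mul_sub, Finset.sum_sub_distrib]
    _ = 2 * ∑ i, ∑ j, a i j * v i := by rw [hswap]; ring
    _ = 2 * ∑ i, (∑ j, a i j) * v i := by simp only [Finset.sum_mul]

section

variable {N : ℕ} {K Ks : ℝ} {W : Fin N → Fin N → ℝ}

theorem hasDerivAt_oimEnergy_comp {γ : ℝ → Fin N → ℝ} {v : Fin N → ℝ} {t : ℝ}
    (hγ : HasDerivAt γ v t) :
    HasDerivAt (fun s => oimEnergy N K Ks W (γ s))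
      (-K * ∑ i, ∑ j ∈ univ.filter (fun j => j ≠ i),
          W i j * (-sin (γ t i - γ t j) * (v i - v j))
        - Ks * ∑ i, -sin (2 * γ t i) * (2 * v i)) t := by
  have hγi : ∀ i, HasDerivAt (fun s => γ s i) (v i) t := hasDerivAt_pi.mp hγ
  have hpair : ∀ i j, HasDerivAt (fun s => cos (γ s i - γ s j))
      (-sin (γ t i - γ t j) * (v i - v j)) t := fun i j =>
    (hasDerivAt_cos _).comp t ((hγi i).sub (hγi j))
  have hsingle : ∀ i, HasDerivAt (fun s => cos (2 * γ s i)) (-sin (2 * γ t i) * (2 * v i)) t :=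
    fun i => (hasDerivAt_cos _).comp t ((hγi i).const_mul 2)
  exact ((HasDerivAt.fun_sum fun i _ => HasDerivAt.fun_sum fun j _ =>
    (hpair i j).const_mul (W i j)).const_mul (-K)).sub
    ((HasDerivAt.fun_sum fun i _ => hsingle i).const_mul Ks)

theorem oimEnergy_derivative_eq_neg_two_mul_oimField (hsym : ∀ i j, W i j = W j i)
    (x v : Fin N → ℝ) :
    -K * ∑ i, ∑ j ∈ univ.filter (fun j => j ≠ i), W i j * (-sin (x i - x j) * (v i - v j))
        - Ks * ∑ i, -sin (2 * x i) * (2 * v i) =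
      -2 * ∑ i, oimField N K Ks W x i * v i := by
  -- the diagonal terms `j = i` vanish, so the filter can be dropped
  have hdiag_free : ∀ i, ∑ j ∈ univ.filter (fun j => j ≠ i),
      W i j * (-sin (x i - x j) * (v i - v j)) = -∑ j, W i j * sin (x i - x j) * (v i - v j) := by
    intro i
    rw [Finset.sum_filter_of_ne fun j _ hne => by contrapose! hne; simp [hne]]
    simp only [← Finset.sum_neg_distrib, mul_assoc, neg_mul, mul_neg]
  have hanti : ∀ i j, W j i * sin (x j - x i) = -(W i j * sin (x i - x j)) := fun i j => by
    rw [hsym j i, ← neg_sub, sin_neg, mul_neg]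
  simp only [hdiag_free, Finset.sum_neg_distrib]
  rw [Finset.sum_sum_mul_sub_of_antisymm hanti]
  simp only [neg_mul_neg, Finset.mul_sum, ← Finset.sum_sub_distrib]
  exact Finset.sum_congr rfl fun i _ => by unfold oimField; ring

theorem HasDerivAt.oimEnergy_comp (hsym : ∀ i j, W i j = W j i) {γ : ℝ → Fin N → ℝ}
    {v : Fin N → ℝ} {t : ℝ} (hγ : HasDerivAt γ v t) :
    HasDerivAt (fun s => oimEnergy N K Ks W (γ s))
      (-2 * ∑ i, oimField N K Ks W (γ t) i * v i) t := by
  rw [← oimEnergy_derivative_eq_neg_two_mul_oimField hsym]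
  exact hasDerivAt_oimEnergy_comp hγ

end

theorem oim_energy_nonincreasing_general (N : ℕ) (K Ks : ℝ)
    (W : Fin N → Fin N → ℝ) (hsym : ∀ i j, W i j = W j i)
    (θ : ℝ → Fin N → ℝ)
    (hθ : ∀ t, HasDerivAt θ (oimField N K Ks W (θ t)) t) :
    ∀ s t : ℝ, s ≤ t → oimEnergy N K Ks W (θ t) ≤ oimEnergy N K Ks W (θ s) := by
  intro s t hst
  refine antitone_of_hasDerivAt_nonpos (fun t => (hθ t).oimEnergy_comp hsym) (fun t => ?_) hst
  exact mul_nonpos_of_nonpos_of_nonneg (by norm_num) (sum_nonneg fun i _ => mul_self_nonneg _)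

/-- every solution of the OIM dynamics has nonincreasing energy. -/
theorem oim_energy_nonincreasing (N : ℕ) (hN : 1 ≤ N) (K Ks : ℝ)
    (W : Fin N → Fin N → ℝ) (hdiag : ∀ i, W i i = 0) (hsym : ∀ i j, W i j = W j i)
    (θ : ℝ → Fin N → ℝ)
    (hθ : ∀ t, HasDerivAt θ (oimField N K Ks W (θ t)) t) :
    ∀ s t : ℝ, s ≤ t → oimEnergy N K Ks W (θ t) ≤ oimEnergy N K Ks W (θ s) :=
  oim_energy_nonincreasing_general N K Ks W hsym θ hθ
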